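/- For n ≥ 3, let L_n be the language of the DFA with states {0,…,n−1}, initial state 0, final state n−1, where a acts as the cycle (1,…,n−1), b as the transposition (0,1), and c as (1 → 0). Then the reverse language L_n^R has state complexity exactly 2^n. -/

import Mathlib

/-!
The subset construction on the reversed automaton gives the upper bound `2 ^ n`. For the lower
bound it suffices that every state of `M` is reachable and that every set `S` of states is the
set of states from which some word `u_S` is accepted: then `v.reverse` separates `u_S.reverse`
from `u_T.reverse` whenever `M.eval v` lies in exactly one of `S` and `T`.

Read a set of states as a bit list: a register (state `0`) followed by a cyclic tape (states
`1, …, n-1`). Taking preimages under `a`, `b`, `c` rotates the tape, swaps the register with the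
first tape cell, and copies the register into that cell; starting from `{n-1}` these three moves
write every bit list.
-/

/-- The state complexity of a language: the least number of states of a DFA accepting it. -/
noncomputable def stateComplexity {α : Type*} (L : Language α) : ℕ :=
  sInf {k : ℕ | ∃ M : DFA α (Fin k), M.accepts = L}

open Function Language

variable {α σ : Type*}

theorem stateComplexity_le_card [Fintype σ] (M : DFA α σ) :
    stateComplexity M.accepts ≤ Fintype.card σ :=
  Nat.sInf_le ⟨M.reindex (Fintype.equivFin σ), M.accepts_reindex _⟩

theorem card_le_stateComplexity {ι : Type*} [Fintype ι] {L : Language α} (hL : L.IsRegular)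
    (w : ι → List α) (hw : Injective (L.leftQuotient ∘ w)) :
    Fintype.card ι ≤ stateComplexity L := by
  obtain ⟨σ, _, M, rfl⟩ := hL
  refine le_csInf ⟨_, M.reindex (Fintype.equivFin σ), M.accepts_reindex _⟩ ?_
  rintro k ⟨D, hD⟩
  rw [← hD, leftQuotient_accepts] at hw
  simpa using Fintype.card_le_of_injective _ (Injective.of_comp (f := D.acceptsFrom) hw)

theorem stateComplexity_reverse_le [Fintype σ] (M : DFA α σ) :
    stateComplexity M.accepts.reverse ≤ 2 ^ Fintype.card σ := by
  have hrev : M.toNFA.reverse.toDFA.accepts = M.accepts.reverse := by ext; simp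
  calc stateComplexity M.accepts.reverse ≤ Fintype.card (Set σ) :=
        hrev ▸ stateComplexity_le_card _
    _ = 2 ^ Fintype.card σ := Fintype.card_set

namespace DFA

def statesAccepting (M : DFA α σ) (u : List α) : Set σ := {q | u ∈ M.acceptsFrom q}

variable (M : DFA α σ)

theorem statesAccepting_cons (a : α) (u : List α) :
    M.statesAccepting (a :: u) = (M.step · a) ⁻¹' M.statesAccepting u := rfl

theorem preimage_step_mem_range_statesAccepting {S : Set σ}
    (hS : S ∈ Set.range M.statesAccepting) (a : α) :
    (M.step · a) ⁻¹' S ∈ Set.range M.statesAccepting := by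
  obtain ⟨u, rfl⟩ := hS
  exact ⟨a :: u, M.statesAccepting_cons a u⟩

theorem mem_leftQuotient_reverse_accepts (u v : List α) :
    v.reverse ∈ M.accepts.reverse.leftQuotient u.reverse ↔ M.eval v ∈ M.statesAccepting u := by
  rw [mem_leftQuotient, mem_reverse, List.reverse_append, List.reverse_reverse,
    List.reverse_reverse, ← mem_leftQuotient, leftQuotient_accepts_apply]
  rfl

end DFA

theorem two_pow_card_le_stateComplexity_reverse [Fintype σ] (M : DFA α σ)
    (hreach : Surjective M.eval) (hcoreach : Surjective M.statesAccepting) :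
    2 ^ Fintype.card σ ≤ stateComplexity M.accepts.reverse := by
  rw [← Fintype.card_set]
  refine card_le_stateComplexity (isRegular_iff.mpr ⟨σ, inferInstance, M, rfl⟩).reverse
    (fun S => (surjInv hcoreach S).reverse) fun S T hST => ?_
  ext q
  obtain ⟨v, rfl⟩ := hreach q
  have hv := (congrArg (v.reverse ∈ ·) hST).to_iff
  simpa only [comp_apply, M.mem_leftQuotient_reverse_accepts, surjInv_eq hcoreach] using hv

namespace ReversalWitness

section Tape

variable {P : List Bool → Prop} {m : ℕ}

theorem rotate_tape (hrot : ∀ b h t, (h :: t).length = m → P (b :: h :: t) → P (b :: (t ++ [h])))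
    (b : Bool) :
    ∀ l₁ l₂ : List Bool, (l₁ ++ l₂).length = m → P (b :: (l₁ ++ l₂)) → P (b :: (l₂ ++ l₁))
  | [], l₂, _, hP => by simpa using hP
  | h :: l₁, l₂, hlen, hP => by
    have := rotate_tape hrot b l₁ (l₂ ++ [h]) (by simp at hlen ⊢; omega)
      (by simpa using hrot b h _ hlen hP)
    simpa using this

theorem write_tape (hrot : ∀ b h t, (h :: t).length = m → P (b :: h :: t) → P (b :: (t ++ [h])))
    (hcopy : ∀ b h t, P (b :: h :: t) → P (b :: b :: t)) (hblank : P (true :: .replicate m false))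
    (w : List Bool) (hw : w.length ≤ m) :
    P (true :: (.replicate (m - w.length) false ++ w)) := by
  induction w using List.reverseRecOn with
  | nil => simpa using hblank
  | append_singleton w x ih =>
    simp only [List.length_append, List.length_singleton] at hw
    obtain ⟨k, hk⟩ : ∃ k, m - w.length = k + 1 := ⟨m - w.length - 1, by omega⟩
    have hblank' : P (true :: false :: (.replicate k false ++ w)) := by
      simpa [hk, List.replicate_succ] using ih (by omega)
    have hwritten : P (true :: x :: (.replicate k false ++ w)) := by
      cases x
      exacts [hblank', hcopy _ _ _ hblank']
    have := hrot _ _ _ (by simp; omega) hwritten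
    simpa [show m - (w.length + 1) = k by omega] using this

theorem forall_of_tape (hm : 1 ≤ m)
    (hrot : ∀ b h t, (h :: t).length = m → P (b :: h :: t) → P (b :: (t ++ [h])))
    (hswap : ∀ b h t, P (b :: h :: t) → P (h :: b :: t))
    (hcopy : ∀ b h t, P (b :: h :: t) → P (b :: b :: t))
    (hstart : P (.replicate m false ++ [true])) :
    ∀ l : List Bool, l.length = m + 1 → P l := by
  have hblank : P (true :: .replicate m false) := by
    rw [← Nat.sub_add_cancel hm, List.replicate_succ, List.cons_append] at hstart
    have := hswap _ _ _ (rotate_tape hrot false (.replicate (m - 1) false) [true]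
      (by simp; omega) hstart)
    rwa [← Nat.sub_add_cancel hm, List.replicate_succ]
  rintro (_ | ⟨b, _ | ⟨h, t⟩⟩) hlen
  · simp at hlen
  · simp at hlen; omega
  have hfalse : P (true :: false :: t) := by
    simpa [show m - t.length = 1 by simp at hlen; omega] using
      write_tape hrot hcopy hblank t (by simp at hlen; omega)
  cases b <;> cases h
  exacts [hcopy _ _ _ (hswap _ _ _ hfalse), hswap _ _ _ hfalse, hfalse, hcopy _ _ _ hfalse]

end Tape

def setOfBits {n : ℕ} (l : List Bool) : Set (Fin n) := {q | l.getD q false}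

theorem exists_setOfBits_eq {n : ℕ} (S : Set (Fin n)) :
    ∃ l : List Bool, l.length = n ∧ setOfBits l = S := by
  classical
  refine ⟨List.ofFn fun q => decide (q ∈ S), List.length_ofFn, ?_⟩
  ext ⟨q, hq⟩
  simp [setOfBits]

theorem setOfBits_replicate_append_singleton {n : ℕ} (hn : 0 < n) :
    setOfBits (.replicate (n - 1) false ++ [true]) = {(⟨n - 1, by omega⟩ : Fin n)} := by
  ext ⟨q, hq⟩
  simp only [setOfBits, Set.mem_ofPred_eq, Set.mem_singleton_iff, Fin.mk.injEq]
  rcases lt_or_eq_of_le (Nat.le_sub_one_of_lt hq) with hlt | rfl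
  · simp [List.getElem?_append_left, hlt, hlt.ne]
  · simp

variable {n : ℕ} (M : DFA (Fin 3) (Fin n))

theorem preimage_step_zero_setOfBits
    (ha : ∀ q : Fin n,
      (M.step q 0).val = if q.val = 0 then 0 else if q.val = n - 1 then 1 else q.val + 1)
    (b h : Bool) (t : List Bool) (ht : (h :: t).length = n - 1) :
    (M.step · 0) ⁻¹' setOfBits (b :: h :: t) = setOfBits (b :: (t ++ [h])) := by
  ext ⟨q, hq⟩
  have hstep := ha ⟨q, hq⟩
  simp only [List.length_cons] at ht
  simp only [setOfBits, Set.mem_preimage, Set.mem_ofPred_eq]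
  rcases q with _ | q
  · simp_all
  · by_cases hlast : q + 1 = n - 1
    · rw [if_neg q.succ_ne_zero, if_pos hlast] at hstep
      obtain rfl : q = t.length := by omega
      simp [hstep]
    · rw [if_neg q.succ_ne_zero, if_neg hlast] at hstep
      simp [hstep, List.getElem?_append_left (show q < t.length by omega)]

theorem preimage_step_one_setOfBits
    (hb : ∀ q : Fin n,
      (M.step q 1).val = if q.val = 0 then 1 else if q.val = 1 then 0 else q.val)
    (b h : Bool) (t : List Bool) :
    (M.step · 1) ⁻¹' setOfBits (b :: h :: t) = setOfBits (h :: b :: t) := by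
  ext ⟨q, hq⟩
  have hstep := hb ⟨q, hq⟩
  simp only [setOfBits, Set.mem_preimage, Set.mem_ofPred_eq]
  rcases q with _ | _ | q <;> simp_all

theorem preimage_step_two_setOfBits
    (hc : ∀ q : Fin n, (M.step q 2).val = if q.val = 1 then 0 else q.val)
    (b h : Bool) (t : List Bool) :
    (M.step · 2) ⁻¹' setOfBits (b :: h :: t) = setOfBits (b :: b :: t) := by
  ext ⟨q, hq⟩
  have hstep := hc ⟨q, hq⟩
  simp only [setOfBits, Set.mem_preimage, Set.mem_ofPred_eq]
  rcases q with _ | _ | q <;> simp_all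

theorem eval_surjective (hn : 0 < n) (hstart : M.start = ⟨0, hn⟩)
    (ha : ∀ q : Fin n,
      (M.step q 0).val = if q.val = 0 then 0 else if q.val = n - 1 then 1 else q.val + 1)
    (hb : ∀ q : Fin n,
      (M.step q 1).val = if q.val = 0 then 1 else if q.val = 1 then 0 else q.val) :
    Surjective M.eval := by
  suffices ∀ k (hk : k < n), ∃ v, M.eval v = ⟨k, hk⟩ from fun ⟨k, hk⟩ => this k hk
  intro k hk
  induction k with
  | zero => exact ⟨[], hstart⟩
  | succ k ih =>
    obtain ⟨v, hv⟩ := ih (by omega)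
    refine ⟨v ++ [if k = 0 then 1 else 0], Fin.ext ?_⟩
    rw [DFA.eval_append_singleton, hv]
    split_ifs with hk0
    · simp [hb, hk0]
    · simp [ha, hk0, show k ≠ n - 1 by omega]

theorem statesAccepting_surjective (hn : 2 ≤ n) (haccept : M.accept = {⟨n - 1, by omega⟩})
    (ha : ∀ q : Fin n,
      (M.step q 0).val = if q.val = 0 then 0 else if q.val = n - 1 then 1 else q.val + 1)
    (hb : ∀ q : Fin n,
      (M.step q 1).val = if q.val = 0 then 1 else if q.val = 1 then 0 else q.val)
    (hc : ∀ q : Fin n, (M.step q 2).val = if q.val = 1 then 0 else q.val) :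
    Surjective M.statesAccepting := by
  have hall : ∀ l : List Bool, l.length = n - 1 + 1 →
      setOfBits l ∈ Set.range M.statesAccepting := by
    refine forall_of_tape (by omega) (fun b h t ht hl => ?_) (fun b h t hl => ?_)
      (fun b h t hl => ?_) ⟨[], ?_⟩
    · rw [← preimage_step_zero_setOfBits M ha b h t ht]
      exact M.preimage_step_mem_range_statesAccepting hl 0
    · rw [← preimage_step_one_setOfBits M hb b h t]
      exact M.preimage_step_mem_range_statesAccepting hl 1
    · rw [← preimage_step_two_setOfBits M hc b h t]
      exact M.preimage_step_mem_range_statesAccepting hl 2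
    · exact haccept.trans (setOfBits_replicate_append_singleton (by omega)).symm
  intro S
  obtain ⟨l, hlen, rfl⟩ := exists_setOfBits_eq S
  exact hall l (by omega)

end ReversalWitness

open ReversalWitness in
/-- For `n ≥ 3`, the reverse of the language `L_n` of the DFA over `{a,b,c}`
(`a = 0 : (1,…,n−1)`, `b = 1 : (0,1)`, `c = 2 : (1 → 0)`; initial state `0`;
final state `n−1`) has state complexity exactly `2^n`. -/
theorem reverse_complexity_of_witness (n : ℕ) (hn : 3 ≤ n) (M : DFA (Fin 3) (Fin n))
    (hstart : M.start = ⟨0, by omega⟩)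
    (haccept : M.accept = {⟨n - 1, by omega⟩})
    (ha : ∀ q : Fin n,
      (M.step q 0).val = if q.val = 0 then 0 else if q.val = n - 1 then 1 else q.val + 1)
    (hb : ∀ q : Fin n,
      (M.step q 1).val = if q.val = 0 then 1 else if q.val = 1 then 0 else q.val)
    (hc : ∀ q : Fin n, (M.step q 2).val = if q.val = 1 then 0 else q.val) :
    stateComplexity ({w : List (Fin 3) | w.reverse ∈ M.accepts} : Language (Fin 3)) = 2 ^ n := by
  change stateComplexity M.accepts.reverse = 2 ^ n
  have hupper := stateComplexity_reverse_le M
  have hlower := two_pow_card_le_stateComplexity_reverse M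
    (eval_surjective M (by omega) hstart ha hb)
    (statesAccepting_surjective M (by omega) haccept ha hb hc)
  rw [Fintype.card_fin] at hupper hlower
  exact le_antisymm hupper hlower
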